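/- arXiv:1004.4349 — 4 statements merged into one kernel-verified Lean document; each statement's English description precedes it below -/
import Mathlib

section
/- Let t = ε(√2 - 1)i with ε > 0, let v₀ : X → ℝ be continuous with η = inf v₀ > 0, and let w : X → ℂ be continuous with sup|w| < η/(2^{3/2}ε). Then Im(t·v₀(x) + (ε² - t²)·w(x)) > 0 for every x ∈ X. -/
open Complex

/-- For `t = ε(√2 - 1)i` with `ε > 0`, `v₀ : X → ℝ` continuous with `η = inf v₀ > 0`, and
`w : X → ℂ` continuous with `sup|w| < η/(2^{3/2}·ε)`, we have
`Im(t·v₀(x) + (ε² - t²)·w(x)) > 0` for every `x`. -/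
theorem stmt3 {X : Type*} [MetricSpace X] [CompactSpace X] [Nonempty X]
    (v₀ : C(X, ℝ)) (w : C(X, ℂ)) (ε η : ℝ) (hε : 0 < ε)
    (hη : η = ⨅ x, v₀ x) (hηpos : 0 < η)
    (hw : ∀ x, ‖w x‖ < η / (2 ^ (3 / 2 : ℝ) * ε)) :
    ∀ x, 0 < (((ε : ℂ) * ((Real.sqrt 2 - 1 : ℝ) : ℂ) * I) * (v₀ x : ℂ) +
      ((ε : ℂ) ^ 2 - ((ε : ℂ) * ((Real.sqrt 2 - 1 : ℝ) : ℂ) * I) ^ 2) * w x).im := by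
  intro x
  have hs2 : Real.sqrt 2 ^ 2 = 2 := Real.sq_sqrt (by norm_num)
  have hs1 : 1 < Real.sqrt 2 := by
    nlinarith [Real.sqrt_nonneg 2]
  have hsle : Real.sqrt 2 < 2 := by nlinarith [Real.sqrt_nonneg 2]
  -- 2^(3/2) = 2 * √2
  have hpow : (2 : ℝ) ^ (3 / 2 : ℝ) = 2 * Real.sqrt 2 := by
    have : (3 / 2 : ℝ) = 1 + 1 / 2 := by norm_num
    rw [this, Real.rpow_add (by norm_num), Real.rpow_one, ← Real.sqrt_eq_rpow]
  -- lower bound on v₀ x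
  have hηx : η ≤ v₀ x := by
    rw [hη]
    exact ciInf_le (IsCompact.bddBelow (isCompact_range v₀.continuous)) x
  -- bound on Im (w x)
  have hwim : |(w x).im| < η / (2 * Real.sqrt 2 * ε) := by
    calc |(w x).im| ≤ ‖w x‖ := Complex.abs_im_le_norm _
      _ < η / (2 ^ (3 / 2 : ℝ) * ε) := hw x
      _ = η / (2 * Real.sqrt 2 * ε) := by rw [hpow]
  -- compute the imaginary part
  have him : (((ε : ℂ) * ((Real.sqrt 2 - 1 : ℝ) : ℂ) * I) * (v₀ x : ℂ) +
      ((ε : ℂ) ^ 2 - ((ε : ℂ) * ((Real.sqrt 2 - 1 : ℝ) : ℂ) * I) ^ 2) * w x).im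
      = ε * (Real.sqrt 2 - 1) * v₀ x + (ε ^ 2 * (1 + (Real.sqrt 2 - 1) ^ 2)) * (w x).im := by
    simp [Complex.add_im, Complex.mul_im, Complex.mul_re, Complex.sub_im, Complex.sub_re,
      pow_two]
    ring_nf
    tauto
  rw [him]
  have hc : ε ^ 2 * (1 + (Real.sqrt 2 - 1) ^ 2) = ε ^ 2 * (4 - 2 * Real.sqrt 2) := by
    nlinarith
  rw [hc]
  have h1 : ε * (Real.sqrt 2 - 1) * η ≤ ε * (Real.sqrt 2 - 1) * v₀ x := by
    apply mul_le_mul_of_nonneg_left hηx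
    nlinarith
  have h2 : (ε ^ 2 * (4 - 2 * Real.sqrt 2)) * (w x).im >
      -(ε * (Real.sqrt 2 - 1) * η) := by
    have hpos : 0 < ε ^ 2 * (4 - 2 * Real.sqrt 2) := by nlinarith
    have hlb : -(η / (2 * Real.sqrt 2 * ε)) < (w x).im := neg_lt_of_abs_lt hwim
    have key : (ε ^ 2 * (4 - 2 * Real.sqrt 2)) * (η / (2 * Real.sqrt 2 * ε))
        = ε * (Real.sqrt 2 - 1) * η := by
      field_simp
      nlinarith [Real.sqrt_nonneg 2]
    nlinarith [mul_lt_mul_of_pos_left hlb hpos]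
  linarith
end

section
/- There exists η > 0 such that: if b is a real traceless 2×2 matrix with ‖b − [[0,1],[-1,0]]‖ ≤ η, a is a complex traceless 2×2 matrix with ‖a‖ ≤ η, z ∈ ℂ satisfies |z| ≤ 1, Im z > 0, and |Im((1-z²)aᵢⱼ)| ≤ C·η·Im z for all entries (which holds when z ∈ ∂D ∩ H or z = (√2-1)i and ‖a‖ ≤ η), and m ∈ ℝ, then Im[z(2b₁m + b₂ − b₃m²) + (1−z²)(2a₁m + a₂ − a₃m²)] > 0. -/
/-!
Write `Q_p(m) = 2p₁m + p₂ − p₃m²`. Since `b` is real, the imaginary part in question is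
`Im z · Q_b(m) + Q_u(m)` with `uᵢ = Im((1 − z²)aᵢ)`. Using `2|m| ≤ 1 + m²`, any `p` with entries of size
at most `ε` has `|Q_p(m)| ≤ 2ε(1 + m²)`; as `Q_b = (1 + m²) + Q_{b − (0,1,−1)}`, the whole expression is at
least `Im z · (1 + m²)(1 − 2η(1 + C))`, which is positive once `η(1 + C) < 1/2`, uniformly in `m`.
-/

/-- The quadratic attached to the traceless matrix `[[p₁, p₂], [p₃, −p₁]]`. -/
def tracelessQuad {R : Type*} [CommRing R] (p₁ p₂ p₃ m : R) : R :=
  2 * p₁ * m + p₂ - p₃ * m ^ 2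

lemma ofReal_tracelessQuad (p₁ p₂ p₃ m : ℝ) :
    ((tracelessQuad p₁ p₂ p₃ m : ℝ) : ℂ) = tracelessQuad (p₁ : ℂ) p₂ p₃ m := by
  simp [tracelessQuad]

lemma im_mul_tracelessQuad (w p₁ p₂ p₃ : ℂ) (m : ℝ) :
    (w * tracelessQuad p₁ p₂ p₃ m).im = tracelessQuad (w * p₁).im (w * p₂).im (w * p₃).im m := by
  simp [tracelessQuad, Complex.mul_im, Complex.mul_re, pow_two]
  ring

section Bounds

variable {R : Type*} [Field R] [LinearOrder R] [IsStrictOrderedRing R]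

lemma abs_tracelessQuad_le {p₁ p₂ p₃ ε : R} (h₁ : |p₁| ≤ ε) (h₂ : |p₂| ≤ ε) (h₃ : |p₃| ≤ ε)
    (m : R) : |tracelessQuad p₁ p₂ p₃ m| ≤ 2 * ε * (1 + m ^ 2) := by
  have hm : 2 * |m| ≤ 1 + m ^ 2 := by nlinarith [sq_nonneg (|m| - 1), sq_abs m]
  have hε : 0 ≤ ε := (abs_nonneg _).trans h₁
  calc |tracelessQuad p₁ p₂ p₃ m| ≤ 2 * |p₁| * |m| + |p₂| + |p₃| * m ^ 2 := by
        unfold tracelessQuad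
        refine (abs_sub _ _).trans (add_le_add ((abs_add_le _ _).trans ?_) ?_)
        · rw [abs_mul, abs_mul, abs_two]
        · rw [abs_mul, abs_sq]
    _ ≤ 2 * ε * |m| + ε + ε * m ^ 2 := by gcongr
    _ ≤ 2 * ε * (1 + m ^ 2) := by nlinarith [mul_le_mul_of_nonneg_left hm hε]

lemma one_sub_two_mul_mul_le_tracelessQuad {b₁ b₂ b₃ η : R} (h₁ : |b₁| ≤ η)
    (h₂ : |b₂ - 1| ≤ η) (h₃ : |b₃ + 1| ≤ η) (m : R) :
    (1 - 2 * η) * (1 + m ^ 2) ≤ tracelessQuad b₁ b₂ b₃ m := by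
  have hdev := (abs_le.mp (abs_tracelessQuad_le h₁ h₂ h₃ m)).1
  have hsplit : tracelessQuad b₁ b₂ b₃ m = (1 + m ^ 2) + tracelessQuad b₁ (b₂ - 1) (b₃ + 1) m := by
    unfold tracelessQuad
    ring
  linarith

end Bounds

/-- There exists `η > 0` such that: if `b = [[b₁,b₂],[b₃,-b₁]]` is a real traceless matrix
`η`-close to the rotation generator `[[0,1],[-1,0]]`, `a = [[a₁,a₂],[a₃,-a₁]]` is a complex
traceless matrix with `‖a‖ ≤ η`, `z ∈ ℂ` satisfies `|z| ≤ 1`, `Im z > 0` and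
`|Im((1-z²)aᵢ)| ≤ C·η·Im z` for all entries, and `m ∈ ℝ`, then
`Im[z(2b₁m + b₂ − b₃m²) + (1−z²)(2a₁m + a₂ − a₃m²)] > 0`. -/
theorem stmt8 (C : ℝ) (hC : 0 < C) :
    ∃ η > (0 : ℝ), ∀ (b₁ b₂ b₃ : ℝ) (a₁ a₂ a₃ z : ℂ) (m : ℝ),
      |b₁| ≤ η → |b₂ - 1| ≤ η → |b₃ + 1| ≤ η →
      ‖a₁‖ ≤ η → ‖a₂‖ ≤ η → ‖a₃‖ ≤ η →
      ‖z‖ ≤ 1 → 0 < z.im →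
      |(((1 : ℂ) - z ^ 2) * a₁).im| ≤ C * η * z.im →
      |(((1 : ℂ) - z ^ 2) * a₂).im| ≤ C * η * z.im →
      |(((1 : ℂ) - z ^ 2) * a₃).im| ≤ C * η * z.im →
      0 < (z * (2 * (b₁ : ℂ) * (m : ℂ) + (b₂ : ℂ) - (b₃ : ℂ) * (m : ℂ) ^ 2) +
        (1 - z ^ 2) * (2 * a₁ * (m : ℂ) + a₂ - a₃ * (m : ℂ) ^ 2)).im := by
  have hC₁ : 0 < 1 + C := by linarith
  obtain ⟨η, hη, hηC⟩ : ∃ η > (0 : ℝ), 2 * η * (1 + C) = 1 / 2 :=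
    ⟨1 / (4 * (1 + C)), by positivity, by field_simp; ring⟩
  refine ⟨η, hη, fun b₁ b₂ b₃ a₁ a₂ a₃ z m hb₁ hb₂ hb₃ _ _ _ _ hz h₁ h₂ h₃ => ?_⟩
  show 0 < (z * tracelessQuad (b₁ : ℂ) b₂ b₃ m + (1 - z ^ 2) * tracelessQuad a₁ a₂ a₃ m).im
  rw [Complex.add_im, ← ofReal_tracelessQuad, Complex.im_mul_ofReal, im_mul_tracelessQuad]
  have hrot := mul_le_mul_of_nonneg_left (one_sub_two_mul_mul_le_tracelessQuad hb₁ hb₂ hb₃ m) hz.le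
  have hpert := (abs_le.mp (abs_tracelessQuad_le h₁ h₂ h₃ m)).1
  have hpos : 0 < z.im * (1 + m ^ 2) * (1 - 2 * η * (1 + C)) := by rw [hηC]; positivity
  linarith
end

section
/- Let ν be an absolutely continuous finite measure on ℝ² whose density is bounded above by 1 and bounded below by 1/8 on its support Δ = {(E,t) : |E| ≤ 1, 0 ≤ t ≤ 1 − E²}. For 0 < δ < 1 let ν_δ = ν * γ_δ be the convolution with linear measure γ_δ on [−δ,δ]×{0}. Then ν_{δ₀} has density bounded above by 2δ₀ on ℝ², and for any 0 < δ₀ < δ₁ < 1 there exists C₁ ≥ 1 such that ν_{δ₁} has density at least (δ₁−δ₀)/10 on the rectangle [−1−δ₀, 1+δ₀] × [0, C₁⁻¹]. -/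
/-! Since `0 ≤ f ≤ 1`, an integral of a horizontal slice of `f` over `[-δ, δ]` is at most `2δ`.
For the lower bound take `C₁ = 5 / (δ₁ - δ₀)`. At height `0 ≤ t ≤ (δ₁ - δ₀) / 5` the slice of
`Δ` contains `|x| ≤ 1 - t`, and for `|E| ≤ 1 + δ₀` the window `[-δ₁, δ₁]` meets
`{s : |E - s| ≤ 1 - t}` in an interval of length at least `4 (δ₁ - δ₀) / 5`, on which `f ≥ 1/8`. -/

open MeasureTheory Set intervalIntegral

lemma intervalIntegrable_of_measurable_of_norm_le {φ : ℝ → ℝ} (hφ : Measurable φ) {M : ℝ}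
    (hM : ∀ x, ‖φ x‖ ≤ M) (a b : ℝ) : IntervalIntegrable φ volume a b :=
  intervalIntegrable_const.mono_fun' hφ.aestronglyMeasurable (ae_of_all _ hM)

lemma mul_sub_le_intervalIntegral_of_le_on {φ : ℝ → ℝ} {a b l r c : ℝ} (hal : a ≤ l)
    (hlr : l ≤ r) (hrb : r ≤ b) (hφ0 : ∀ x, 0 ≤ φ x) (hφ : IntervalIntegrable φ volume a b)
    (hc : ∀ x ∈ Icc l r, c ≤ φ x) : c * (r - l) ≤ ∫ x in a..b, φ x :=
  calc c * (r - l) = ∫ _ in l..r, c := by simp [mul_comm]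
    _ ≤ ∫ x in l..r, φ x :=
      integral_mono_on hlr intervalIntegrable_const
        (hφ.mono_set (by
          rw [uIcc_of_le hlr, uIcc_of_le (hal.trans (hlr.trans hrb))]
          exact Icc_subset_Icc hal hrb)) hc
    _ ≤ ∫ x in a..b, φ x := integral_mono_interval hal hlr hrb (ae_of_all _ hφ0) hφ

lemma le_one_sub_sq_of_abs_le_one_sub {x t : ℝ} (ht : 0 ≤ t) (hx : |x| ≤ 1 - t) :
    t ≤ 1 - x ^ 2 := by
  have hsq : x ^ 2 ≤ (1 - t) ^ 2 := sq_le_sq' (abs_le.1 hx).1 (abs_le.1 hx).2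
  have ht1 : t ≤ 1 := by linarith [abs_nonneg x]
  nlinarith

lemma abs_sub_le_of_mem_Icc_max_min {E ρ a b s : ℝ}
    (hs : s ∈ Icc (max (E - ρ) a) (min (E + ρ) b)) : |E - s| ≤ ρ :=
  abs_le.2 ⟨by linarith [hs.2.trans (min_le_left _ _)], by linarith [(le_max_left _ _).trans hs.1]⟩

lemma le_min_sub_max_of_abs_le {E ρ δ₀ δ₁ : ℝ} (hδ₀ : 0 ≤ δ₀) (h01 : δ₀ ≤ δ₁) (hδ₁ : δ₁ ≤ 1)
    (hE : |E| ≤ 1 + δ₀) (hρ : 1 - (δ₁ - δ₀) / 5 ≤ ρ) :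
    4 * (δ₁ - δ₀) / 5 ≤ min (E + ρ) δ₁ - max (E - ρ) (-δ₁) := by
  rw [abs_le] at hE
  rcases max_cases (E - ρ) (-δ₁) with ⟨hl, -⟩ | ⟨hl, -⟩ <;>
    rcases min_cases (E + ρ) δ₁ with ⟨hr, -⟩ | ⟨hr, -⟩ <;>
    rw [hl, hr] <;> linarith

/-- Let `ν` be a measure on `ℝ²` with density `f` supported on
`Δ = {(E,t) : |E| ≤ 1, 0 ≤ t ≤ 1 - E²}`, bounded above by `1` and below by `1/8` on `Δ`.
The density of the convolution `ν_δ = ν * γ_δ` with linear measure on `[-δ,δ] × {0}` is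
`g δ (E,t) = ∫_{-δ}^{δ} f(E-s, t) ds`. Then `g δ₀ ≤ 2δ₀` everywhere, and for
`0 < δ₀ < δ₁ < 1` there is `C₁ ≥ 1` with `g δ₁ ≥ (δ₁-δ₀)/10` on
`[-1-δ₀, 1+δ₀] × [0, C₁⁻¹]`. -/
theorem stmt10 (f : ℝ × ℝ → ℝ) (hf_meas : Measurable f) (hf_nonneg : ∀ p, 0 ≤ f p)
    (Δ : Set (ℝ × ℝ)) (hΔ : Δ = {p : ℝ × ℝ | |p.1| ≤ 1 ∧ 0 ≤ p.2 ∧ p.2 ≤ 1 - p.1 ^ 2})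
    (h_upper : ∀ p ∈ Δ, f p ≤ 1) (h_lower : ∀ p ∈ Δ, 1 / 8 ≤ f p)
    (h_supp : ∀ p ∉ Δ, f p = 0)
    (g : ℝ → ℝ × ℝ → ℝ) (hg : ∀ δ p, g δ p = ∫ s in (-δ)..δ, f (p.1 - s, p.2)) :
    (∀ δ₀ : ℝ, 0 < δ₀ → δ₀ < 1 → ∀ p, g δ₀ p ≤ 2 * δ₀) ∧
    (∀ δ₀ δ₁ : ℝ, 0 < δ₀ → δ₀ < δ₁ → δ₁ < 1 → ∃ C₁ : ℝ, 1 ≤ C₁ ∧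
      ∀ p ∈ Set.Icc (-1 - δ₀) (1 + δ₀) ×ˢ Set.Icc (0 : ℝ) C₁⁻¹,
        (δ₁ - δ₀) / 10 ≤ g δ₁ p) := by
  have hf_norm : ∀ p, ‖f p‖ ≤ 1 := fun p => by
    rw [Real.norm_of_nonneg (hf_nonneg p)]
    by_cases hp : p ∈ Δ
    · exact h_upper p hp
    · simp [h_supp p hp]
  refine ⟨fun δ₀ hδ₀ _ p => ?_, fun δ₀ δ₁ hδ₀ h01 hδ₁ => ⟨5 / (δ₁ - δ₀), ?_, ?_⟩⟩
  · calc g δ₀ p ≤ ‖∫ s in (-δ₀)..δ₀, f (p.1 - s, p.2)‖ := (hg δ₀ p).trans_le (Real.le_norm_self _)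
      _ ≤ 1 * |δ₀ - -δ₀| := norm_integral_le_of_norm_le_const fun s _ => hf_norm _
      _ = 2 * δ₀ := by rw [abs_of_pos (by linarith)]; ring
  · rw [le_div_iff₀ (by linarith)]
    linarith
  · rintro ⟨E, t⟩ ⟨⟨hE₀, hE₁⟩, ht₀, ht₁⟩
    rw [inv_div] at ht₁
    set l := max (E - (1 - t)) (-δ₁)
    set r := min (E + (1 - t)) δ₁
    have hlen : 4 * (δ₁ - δ₀) / 5 ≤ r - l :=
      le_min_sub_max_of_abs_le hδ₀.le h01.le hδ₁.le (abs_le.2 ⟨by linarith, hE₁⟩) (by linarith)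
    have hslice : ∀ s ∈ Icc l r, (E - s, t) ∈ Δ := fun s hs => by
      have hs : |E - s| ≤ 1 - t := abs_sub_le_of_mem_Icc_max_min hs
      rw [hΔ]
      exact ⟨hs.trans (by linarith), ht₀, le_one_sub_sq_of_abs_le_one_sub ht₀ hs⟩
    have hint : IntervalIntegrable (fun s => f (E - s, t)) volume (-δ₁) δ₁ :=
      intervalIntegrable_of_measurable_of_norm_le (by fun_prop) (fun s => hf_norm _) _ _
    calc (δ₁ - δ₀) / 10 ≤ 1 / 8 * (r - l) := by linarith
      _ ≤ ∫ s in (-δ₁)..δ₁, f (E - s, t) :=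
        mul_sub_le_intervalIntegral_of_le_on (le_max_right _ _) (by linarith) (min_le_right _ _)
          (fun s => hf_nonneg _) hint fun s hs => h_lower _ (hslice s hs)
      _ = g δ₁ (E, t) := (hg δ₁ (E, t)).symm
end

section
/- Let A : X → SL(2,ℂ) be continuous on a compact metric space X with homeomorphism f and f-invariant probability measure μ, and suppose there exist a Borel map 𝓑 : X → SL(2,ℂ) bounded with bounded inverse, and a Borel function γ : X → ℂ∖{0} bounded away from 0 and ∞, such that 𝓑(f(x)) A(x) 𝓑(x)⁻¹ = diag(γ(x), γ(x)⁻¹) for all x, and |γ_n(x)| → ∞ uniformly in x where γ_n(x) = Π_{k<n} γ(f^k(x)). Then the Lyapunov exponent L(A) = lim_{n→∞} (1/n)∫ ln‖A_n(x)‖ dμ equals ∫_X ln|γ(x)| dμ(x). -/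
open MeasureTheory Matrix Filter

attribute [local instance] Matrix.normedAddCommGroup

/-!
Conjugating `Aₙ` by the bounded matrices `B` turns it into `diag(γₙ, γₙ⁻¹)`, whose entrywise
sup norm is `|γₙ|` as soon as `|γₙ| ≥ 1`. Hence `ln ‖Aₙ(x)‖` and `ln |γₙ(x)|` differ by a
constant `C` independent of `n` and `x`, once `n` is large. Since `ln |γₙ|` is the Birkhoff sum of
`ln |γ|`, invariance of `μ` gives `∫ ln |γₙ| dμ = n ∫ ln |γ| dμ`, and `C / n → 0`.
-/

lemma Real.abs_log_sub_log_le {a b K : ℝ} (ha : 0 ≤ a) (hb : 0 < b) (hab : a ≤ K * b)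
    (hba : b ≤ K * a) : |Real.log a - Real.log b| ≤ Real.log K := by
  have ha' : 0 < a := ha.lt_of_ne (by rintro rfl; simp at hba; linarith)
  have hK : 0 < K := pos_of_mul_pos_left (hb.trans_le hba) ha
  have hlog_ab := Real.log_le_log ha' hab
  have hlog_ba := Real.log_le_log hb hba
  rw [Real.log_mul hK.ne' hb.ne'] at hlog_ab
  rw [Real.log_mul hK.ne' ha'.ne'] at hlog_ba
  rw [abs_le]
  constructor <;> linarith

lemma tendsto_one_div_mul_of_abs_sub_le {u : ℕ → ℝ} {L C : ℝ}
    (h : ∀ᶠ n in atTop, |u n - n * L| ≤ C) :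
    Tendsto (fun n : ℕ => (1 / (n : ℝ)) * u n) atTop (nhds L) := by
  rw [← tendsto_sub_nhds_zero_iff]
  refine squeeze_zero_norm' ?_ (tendsto_const_div_atTop_nhds_zero_nat C)
  filter_upwards [h, eventually_gt_atTop 0] with n hn hn0
  have hn0' : (0 : ℝ) < n := Nat.cast_pos.mpr hn0
  have : (1 / (n : ℝ)) * u n - L = (u n - n * L) / n := by field_simp
  rw [this, norm_div, Real.norm_eq_abs, Real.norm_natCast]
  exact div_le_div_of_nonneg_right hn hn0'.le

namespace Matrix

variable {l m n α : Type*} [Fintype l] [Fintype m] [Fintype n] [NormedRing α]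

lemma norm_mul_le_card_mul (M : Matrix l m α) (N : Matrix m n α) :
    ‖M * N‖ ≤ Fintype.card m * (‖M‖ * ‖N‖) := by
  rw [norm_le_iff (by positivity)]
  intro i j
  calc ‖(M * N) i j‖ ≤ ∑ k, ‖M i k‖ * ‖N k j‖ :=
        (norm_sum_le _ _).trans (Finset.sum_le_sum fun k _ => norm_mul_le _ _)
    _ ≤ ∑ _k : m, ‖M‖ * ‖N‖ := Finset.sum_le_sum fun k _ =>
        mul_le_mul (norm_entry_le_entrywise_sup_norm M) (norm_entry_le_entrywise_sup_norm N)
          (norm_nonneg _) (norm_nonneg _)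
    _ = Fintype.card m * (‖M‖ * ‖N‖) := by simp

lemma norm_mul_mul_le_of_le {K : ℝ} (P : Matrix l m α) (A : Matrix m n α)
    (Q : Matrix n n α) (hP : ‖P‖ ≤ K) (hQ : ‖Q‖ ≤ K) :
    ‖P * A * Q‖ ≤ Fintype.card m * Fintype.card n * K ^ 2 * ‖A‖ := by
  have hK : 0 ≤ K := (norm_nonneg _).trans hP
  calc ‖P * A * Q‖ ≤ Fintype.card n * (Fintype.card m * (‖P‖ * ‖A‖) * ‖Q‖) :=
        (norm_mul_le_card_mul _ _).trans (by gcongr; exact norm_mul_le_card_mul _ _)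
    _ ≤ Fintype.card n * (Fintype.card m * (K * ‖A‖) * K) := by gcongr
    _ = Fintype.card m * Fintype.card n * K ^ 2 * ‖A‖ := by ring

lemma norm_fin_two_diag_inv {𝕜 : Type*} [NormedDivisionRing 𝕜] {a : 𝕜} (ha : 1 ≤ ‖a‖) :
    ‖!![a, 0; 0, a⁻¹]‖ = ‖a‖ := by
  have ha_inv : ‖a‖⁻¹ ≤ ‖a‖ := (inv_le_one_of_one_le₀ ha).trans ha
  refine le_antisymm ((norm_le_iff (norm_nonneg a)).mpr fun i j => ?_)
    (norm_entry_le_entrywise_sup_norm (!![a, 0; 0, a⁻¹]) (i := 0) (j := 0))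
  fin_cases i <;> fin_cases j <;> simp [ha_inv]

lemma abs_log_norm_sub_log_norm_le_of_conj [DecidableEq m] {K : ℝ}
    {P P' Q Q' M D : Matrix m m α}
    (hP : P' * P = 1) (hQ : Q * Q' = 1) (hconj : P * M * Q = D)
    (hPK : ‖P‖ ≤ K) (hP'K : ‖P'‖ ≤ K) (hQK : ‖Q‖ ≤ K) (hQ'K : ‖Q'‖ ≤ K) (hD : 0 < ‖D‖) :
    |Real.log ‖M‖ - Real.log ‖D‖| ≤ Real.log (Fintype.card m * Fintype.card m * K ^ 2) := by
  have hM : P' * D * Q' = M := by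
    rw [← hconj, ← Matrix.mul_assoc, ← Matrix.mul_assoc, hP, Matrix.one_mul, Matrix.mul_assoc, hQ,
      Matrix.mul_one]
  exact Real.abs_log_sub_log_le (norm_nonneg _) hD
    (hM ▸ norm_mul_mul_le_of_le P' D Q' hP'K hQ'K) (hconj ▸ norm_mul_mul_le_of_le P M Q hPK hQK)

end Matrix

section Cocycle

variable {X G : Type*} [Monoid G]

def cocycle (f : X → X) (A : X → G) : ℕ → X → G
  | 0, _ => 1
  | n + 1, x => A (f^[n] x) * cocycle f A n x

lemma eq_cocycle {f : X → X} {A : X → G} {An : ℕ → X → G} (hAn0 : ∀ x, An 0 x = 1)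
    (hAnS : ∀ n x, An (n + 1) x = A (f^[n] x) * An n x) : An = cocycle f A := by
  funext n x
  induction n with
  | zero => exact hAn0 x
  | succ n ih => rw [hAnS, ih, cocycle]

lemma continuous_cocycle [TopologicalSpace X] [TopologicalSpace G] [ContinuousMul G]
    {f : X → X} {A : X → G} (hf : Continuous f) (hA : Continuous A) (n : ℕ) :
    Continuous (cocycle f A n) := by
  induction n with
  | zero => exact continuous_const
  | succ n ih => exact (hA.comp (hf.iterate n)).mul ih

lemma conj_cocycle {f : X → X} {A D B B' : X → G}
    (hB : ∀ x, B x * B' x = 1 ∧ B' x * B x = 1) (hconj : ∀ x, B (f x) * A x * B' x = D x)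
    (n : ℕ) (x : X) : B (f^[n] x) * cocycle f A n x * B' x = cocycle f D n x := by
  induction n with
  | zero => simp [cocycle, (hB x).1]
  | succ n ih =>
    set y := f^[n] x
    calc B (f^[n + 1] x) * cocycle f A (n + 1) x * B' x
        = B (f y) * A y * (B' y * B y) * cocycle f A n x * B' x := by
          simp [cocycle, y, Function.iterate_succ_apply', (hB y).2, mul_assoc]
      _ = D y * (B y * cocycle f A n x * B' x) := by simp only [← hconj, mul_assoc]
      _ = cocycle f D (n + 1) x := by rw [ih, cocycle]

lemma cocycle_fin_two_diag_inv {𝕜 : Type*} [Field 𝕜] (f : X → X) (γ : X → 𝕜) (n : ℕ)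
    (x : X) :
    cocycle f (fun x => !![γ x, 0; 0, (γ x)⁻¹]) n x =
      !![∏ k ∈ Finset.range n, γ (f^[k] x), 0; 0, (∏ k ∈ Finset.range n, γ (f^[k] x))⁻¹] := by
  induction n with
  | zero => simp [cocycle, one_fin_two]
  | succ n ih => simp [cocycle, ih, Finset.prod_range_succ, mul_comm]

end Cocycle

section Integral

variable {α E : Type*} [MeasurableSpace α] {μ : Measure α}
  [NormedAddCommGroup E] {f : α → α}

lemma MeasureTheory.MeasurePreserving.integrable_birkhoffSum (hf : MeasurePreserving f μ μ)
    {g : α → E} (hg : Integrable g μ) (n : ℕ) : Integrable (birkhoffSum f g n) μ := by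
  unfold birkhoffSum
  exact integrable_finsetSum _ fun k _ => (hf.iterate k).integrable_comp_of_integrable hg

lemma MeasureTheory.MeasurePreserving.integral_birkhoffSum [NormedSpace ℝ E]
    (hf : MeasurePreserving f μ μ) {g : α → E} (hg : Integrable g μ) (n : ℕ) :
    ∫ x, birkhoffSum f g n x ∂μ = n • ∫ x, g x ∂μ := by
  have hcomp : ∀ k, ∫ x, g (f^[k] x) ∂μ = ∫ x, g x ∂μ := fun k => by
    rw [← integral_map (hf.iterate k).aemeasurable, (hf.iterate k).map_eq]
    rw [(hf.iterate k).map_eq]; exact hg.aestronglyMeasurable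
  simp only [birkhoffSum]
  rw [integral_finsetSum (f := fun k x => g (f^[k] x)) _
    fun k _ => (hf.iterate k).integrable_comp_of_integrable hg]
  simp [hcomp]

lemma abs_integral_sub_le_of_abs_sub_le [IsProbabilityMeasure μ] {u v : α → ℝ} {C : ℝ}
    (hu : AEStronglyMeasurable u μ) (hv : Integrable v μ) (h : ∀ x, |u x - v x| ≤ C) :
    |∫ x, u x ∂μ - ∫ x, v x ∂μ| ≤ C := by
  have hdiff : Integrable (u - v) μ := Integrable.of_bound (hu.sub hv.aestronglyMeasurable) C
    (ae_of_all _ fun x => (Real.norm_eq_abs _).trans_le (h x))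
  have hu' : Integrable u μ := by simpa using hdiff.add hv
  rw [← integral_sub hu' hv]
  simpa using norm_integral_le_of_norm_le_const (μ := μ)
    (ae_of_all _ fun x => (Real.norm_eq_abs _).trans_le (h x))

lemma integrable_log_norm_of_bounds [IsFiniteMeasure μ] {F : Type*} [NormedAddCommGroup F]
    [MeasurableSpace F] [OpensMeasurableSpace F] {γ : α → F} (hγ : Measurable γ)
    {cl cu : ℝ} (hcl : 0 < cl) (hγbd : ∀ x, cl ≤ ‖γ x‖ ∧ ‖γ x‖ ≤ cu) :
    Integrable (fun x => Real.log ‖γ x‖) μ :=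
  Integrable.of_bound (hγ.norm.log).aestronglyMeasurable (max |Real.log cl| |Real.log cu|)
    (ae_of_all _ fun x => abs_le_max_abs_abs
      (Real.log_le_log hcl (hγbd x).1) (Real.log_le_log (hcl.trans_le (hγbd x).1) (hγbd x).2))

end Integral

theorem stmt16_general {X : Type*} [MetricSpace X]
    [MeasurableSpace X] [BorelSpace X]
    (f : X ≃ₜ X) (μ : Measure X) [IsProbabilityMeasure μ]
    (hf : MeasurePreserving (f : X → X) μ μ)
    (A : X → Matrix (Fin 2) (Fin 2) ℂ) (hA : Continuous A)
    (An : ℕ → X → Matrix (Fin 2) (Fin 2) ℂ)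
    (hAn0 : ∀ x, An 0 x = 1)
    (hAnS : ∀ n x, An (n + 1) x = A ((f : X → X)^[n] x) * An n x)
    (B Binv : X → Matrix (Fin 2) (Fin 2) ℂ)
    (hBinv : ∀ x, B x * Binv x = 1 ∧ Binv x * B x = 1)
    (MB : ℝ) (hMB : ∀ x, ‖B x‖ ≤ MB ∧ ‖Binv x‖ ≤ MB)
    (γ : X → ℂ) (hγm : Measurable γ) (cl cu : ℝ) (hcl : 0 < cl)
    (hγbd : ∀ x, cl ≤ ‖γ x‖ ∧ ‖γ x‖ ≤ cu)
    (hconj : ∀ x, B (f x) * A x * Binv x = !![γ x, 0; 0, (γ x)⁻¹])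
    (hgrow : ∀ K : ℝ, ∃ N : ℕ, ∀ n ≥ N, ∀ x,
      K ≤ ‖∏ k ∈ Finset.range n, γ ((f : X → X)^[k] x)‖) :
    Tendsto (fun n : ℕ => (1 / (n : ℝ)) * ∫ x, Real.log ‖An n x‖ ∂μ)
      atTop (nhds (∫ x, Real.log ‖γ x‖ ∂μ)) := by
  have hAn : An = cocycle f A := eq_cocycle hAn0 hAnS
  have hlogγ := integrable_log_norm_of_bounds (μ := μ) hγm hcl hγbd
  obtain ⟨N, hN⟩ := hgrow 1
  have hclose : ∀ n ≥ N, ∀ x, |Real.log ‖An n x‖ - birkhoffSum f (fun x => Real.log ‖γ x‖) n x|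
      ≤ Real.log (2 * 2 * MB ^ 2) := by
    intro n hn x
    have hγn : 1 ≤ ‖∏ k ∈ Finset.range n, γ (f^[k] x)‖ := hN n hn x
    have hconjn := conj_cocycle hBinv hconj n x
    rw [cocycle_fin_two_diag_inv, ← hAn] at hconjn
    have hsum : Real.log ‖∏ k ∈ Finset.range n, γ (f^[k] x)‖ =
        birkhoffSum f (fun x => Real.log ‖γ x‖) n x := by
      rw [norm_prod, Real.log_prod fun k _ => (hcl.trans_le (hγbd _).1).ne']
      rfl
    rw [← hsum, ← norm_fin_two_diag_inv hγn]
    exact abs_log_norm_sub_log_norm_le_of_conj (hBinv _).2 (hBinv x).2 hconjn (hMB _).1 (hMB _).2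
      (hMB x).2 (hMB x).1 (by rw [norm_fin_two_diag_inv hγn]; linarith)
  refine tendsto_one_div_mul_of_abs_sub_le (C := Real.log (2 * 2 * MB ^ 2)) ?_
  filter_upwards [eventually_ge_atTop N] with n hn
  have hmeas : Measurable fun x => Real.log ‖An n x‖ := by
    rw [hAn]; exact (continuous_cocycle f.continuous hA n).norm.measurable.log
  rw [← nsmul_eq_mul, ← hf.integral_birkhoffSum hlogγ n]
  exact abs_integral_sub_le_of_abs_sub_le hmeas.aestronglyMeasurable
    (hf.integrable_birkhoffSum hlogγ n) (hclose n hn)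

/-- Suppose the continuous `SL(2,ℂ)`-cocycle `A` over `(f, μ)` is conjugated, by a Borel
map `𝓑` bounded with bounded inverse, to the diagonal cocycle `diag(γ, γ⁻¹)` where `γ` is
Borel, bounded away from `0` and `∞`, and `|γₙ| → ∞` uniformly. Then the Lyapunov exponent
`L(A) = lim (1/n)∫ ln‖Aₙ‖ dμ` equals `∫ ln|γ| dμ`. -/
theorem stmt16 {X : Type*} [MetricSpace X] [CompactSpace X]
    [MeasurableSpace X] [BorelSpace X]
    (f : X ≃ₜ X) (μ : Measure X) [IsProbabilityMeasure μ]
    (hf : MeasurePreserving (f : X → X) μ μ)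
    (A : X → Matrix (Fin 2) (Fin 2) ℂ) (hA : Continuous A) (hdet : ∀ x, (A x).det = 1)
    (An : ℕ → X → Matrix (Fin 2) (Fin 2) ℂ)
    (hAn0 : ∀ x, An 0 x = 1)
    (hAnS : ∀ n x, An (n + 1) x = A ((f : X → X)^[n] x) * An n x)
    (B Binv : X → Matrix (Fin 2) (Fin 2) ℂ)
    (hBm : ∀ i j, Measurable fun x => B x i j) (hBinvm : ∀ i j, Measurable fun x => Binv x i j)
    (hBinv : ∀ x, B x * Binv x = 1 ∧ Binv x * B x = 1)
    (MB : ℝ) (hMB : ∀ x, ‖B x‖ ≤ MB ∧ ‖Binv x‖ ≤ MB)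
    (γ : X → ℂ) (hγm : Measurable γ) (cl cu : ℝ) (hcl : 0 < cl)
    (hγbd : ∀ x, cl ≤ ‖γ x‖ ∧ ‖γ x‖ ≤ cu)
    (hconj : ∀ x, B (f x) * A x * Binv x = !![γ x, 0; 0, (γ x)⁻¹])
    (hgrow : ∀ K : ℝ, ∃ N : ℕ, ∀ n ≥ N, ∀ x,
      K ≤ ‖∏ k ∈ Finset.range n, γ ((f : X → X)^[k] x)‖) :
    Tendsto (fun n : ℕ => (1 / (n : ℝ)) * ∫ x, Real.log ‖An n x‖ ∂μ)
      atTop (nhds (∫ x, Real.log ‖γ x‖ ∂μ)) :=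
  stmt16_general f μ hf A hA An hAn0 hAnS B Binv hBinv MB hMB γ hγm cl cu hcl hγbd hconj hgrow
end
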